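/- arXiv:2106.14355 — 2 statements merged into one kernel-verified Lean document; each statement's English description precedes it below -/
import Mathlib

section
/- If B ∈ M_{2n}(ℝ) satisfies Bᵀ[ω]B = λ[ω] for a skew-symmetric invertible matrix [ω] and λ ∈ ℝ*, then det B = λⁿ. -/
/-!
Taking determinants in `Bᵀ ω B = l • ω` gives `det B = ± lⁿ`; the sign comes from a complex
structure. The polar decomposition writes `ω = G K` with `G = |ω|` positive definite and `K² = -1`.
Then `Bᵀ G (B - t K B K) = Bᵀ G B + t l G` is positive definite whenever `t l > 0`, so `det B` and
`det (B - t K B K)` have the same sign. For `l > 0` take `t = 1`: `B - K B K` commutes with `K`,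
i.e. is complex linear for the complex structure `K`, so its determinant is `|det_ℂ|² ≥ 0`.
For `l < 0` take `t = -1`: `B + K B K` anticommutes with `K`, i.e. is conjugate linear, so the sign
of its determinant is that of complex conjugation on `ℂⁿ`, namely `(-1)ⁿ`.
-/

open Matrix

theorem LinearMap.det_nonneg_of_map_I_smul {V : Type*} [AddCommGroup V] [Module ℂ V] [Module ℝ V]
    [IsScalarTower ℝ ℂ V] [Module.Finite ℂ V] (f : V →ₗ[ℝ] V)
    (hf : ∀ x, f (Complex.I • x) = Complex.I • f x) : 0 ≤ LinearMap.det f := by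
  have hsmul (z : ℂ) (y : V) : z • y = z.re • y + z.im • Complex.I • y := by
    conv_lhs => rw [← Complex.re_add_im z]
    rw [add_smul, mul_smul, ← Complex.coe_algebraMap, algebraMap_smul, algebraMap_smul]
  let g : V →ₗ[ℂ] V :=
    { f with
      map_smul' := fun z x => by
        simp only [AddHom.toFun_eq_coe, LinearMap.coe_toAddHom, RingHom.id_apply]
        rw [hsmul, map_add, map_smul, map_smul, hf, ← hsmul] }
  have hfg : f = g.restrictScalars ℝ := rfl
  rw [hfg, LinearMap.det_restrictScalars, Algebra.norm_complex_apply]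
  exact Complex.normSq_nonneg _

theorem LinearMap.neg_one_pow_mul_det_nonneg_of_map_I_smul_eq_neg {m : ℕ}
    (f : (Fin m → ℂ) →ₗ[ℝ] (Fin m → ℂ)) (hf : ∀ x, f (Complex.I • x) = -(Complex.I • f x)) :
    0 ≤ (-1) ^ m * LinearMap.det f := by
  let conj : (Fin m → ℂ) →ₗ[ℝ] (Fin m → ℂ) :=
    LinearMap.pi fun i => Complex.conjAe.toLinearEquiv.toLinearMap.comp (LinearMap.proj i)
  have hconj : LinearMap.det conj = (-1) ^ m := by
    rw [LinearMap.det_pi, Complex.det_conjAe, Finset.prod_const, Finset.card_univ,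
      Fintype.card_fin]
  have hconjI (y : Fin m → ℂ) : conj (Complex.I • y) = -(Complex.I • conj y) := by
    ext i
    simp [conj]
  have := det_nonneg_of_map_I_smul (conj ∘ₗ f) fun x => by
    rw [LinearMap.comp_apply, LinearMap.comp_apply, hf, map_neg, hconjI, neg_neg]
  rwa [LinearMap.det_comp, hconj] at this

variable {ι : Type*} [Fintype ι] [DecidableEq ι]

theorem Matrix.exists_linearEquiv_mulVec_eq_I_smul {K : Matrix ι ι ℝ} (hK : K * K = -1) :
    ∃ (m : ℕ) (e : (ι → ℝ) ≃ₗ[ℝ] (Fin m → ℂ)), ∀ v, e (K *ᵥ v) = Complex.I • e v := by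
  let φ : ℂ →ₐ[ℝ] Module.End ℝ (ι → ℝ) :=
    Complex.liftAux (toLin' K)
      (by rw [Module.End.mul_eq_comp, ← toLin'_mul, hK, map_neg, toLin'_one]; rfl)
  let _ : Module ℂ (ι → ℝ) := Module.compHom (ι → ℝ) φ.toRingHom
  have : IsScalarTower ℝ ℂ (ι → ℝ) :=
    ⟨fun r z v => by
      show φ (r • z) v = r • φ z v
      rw [map_smul]; rfl⟩
  have : Module.Finite ℂ (ι → ℝ) := Module.Finite.right ℝ ℂ _
  let b := Module.finBasis ℂ (ι → ℝ)
  refine ⟨_, b.equivFun.restrictScalars ℝ, fun v => ?_⟩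
  have hI : K *ᵥ v = Complex.I • v := by
    show _ = φ Complex.I v
    simp [φ]
  rw [hI]
  exact b.equivFun.map_smul _ _

theorem Matrix.det_nonneg_of_commute {K M : Matrix ι ι ℝ} (hK : K * K = -1)
    (hKM : Commute K M) : 0 ≤ M.det := by
  obtain ⟨m, e, he⟩ := exists_linearEquiv_mulVec_eq_I_smul hK
  have he' (x : Fin m → ℂ) : e.symm (Complex.I • x) = K *ᵥ e.symm x := by
    rw [e.symm_apply_eq, he, e.apply_symm_apply]
  have := LinearMap.det_nonneg_of_map_I_smul
    (e.toLinearMap ∘ₗ toLin' M ∘ₗ e.symm.toLinearMap) fun x => by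
      simp only [LinearMap.comp_apply, LinearEquiv.coe_coe, toLin'_apply, he', mulVec_mulVec]
      rw [← hKM.eq, ← mulVec_mulVec, he]
  rwa [LinearMap.det_conj, LinearMap.det_toLin'] at this

theorem Matrix.neg_one_pow_mul_det_nonneg_of_anticommute {n : ℕ} (hι : Fintype.card ι = 2 * n)
    {K M : Matrix ι ι ℝ} (hK : K * K = -1) (hKM : K * M = -(M * K)) : 0 ≤ (-1) ^ n * M.det := by
  obtain ⟨m, e, he⟩ := exists_linearEquiv_mulVec_eq_I_smul hK
  have hm : m = n := by
    have := e.finrank_eq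
    simp only [Module.finrank_fintype_fun_eq_card, Module.finrank_pi_fintype,
      Complex.finrank_real_complex, Finset.sum_const, Finset.card_univ, Fintype.card_fin,
      smul_eq_mul, hι] at this
    omega
  have he' (x : Fin m → ℂ) : e.symm (Complex.I • x) = K *ᵥ e.symm x := by
    rw [e.symm_apply_eq, he, e.apply_symm_apply]
  have hMK : M * K = -(K * M) := neg_eq_iff_eq_neg.mp hKM.symm
  have := LinearMap.neg_one_pow_mul_det_nonneg_of_map_I_smul_eq_neg
    (e.toLinearMap ∘ₗ toLin' M ∘ₗ e.symm.toLinearMap) fun x => by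
      simp only [LinearMap.comp_apply, LinearEquiv.coe_coe, toLin'_apply, he', mulVec_mulVec]
      rw [hMK, neg_mulVec, ← mulVec_mulVec, map_neg, he]
  rwa [LinearMap.det_conj, LinearMap.det_toLin', hm] at this

open scoped MatrixOrder in
theorem Matrix.exists_posDef_mul_eq_of_transpose_eq_neg {ω : Matrix ι ι ℝ} (hskew : ωᵀ = -ω)
    (hω : IsUnit ω.det) : ∃ G K : Matrix ι ι ℝ, G.PosDef ∧ K * K = -1 ∧ G * K = ω := by
  have hstar : star ω = -ω := hskew
  have : IsStarNormal ω := ⟨by rw [hstar]; exact (Commute.refl ω).neg_left⟩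
  set G := CFC.abs ω
  have hGG : G * G = -(ω * ω) := by rw [CFC.abs_mul_abs, hstar, neg_mul]
  have hGω : Commute G ω := CFC.commute_abs_self ω
  have hG : G.PosDef := by
    refine (CFC.abs_nonneg ω).posSemidef.posDef_iff_det_ne_zero.mpr fun h => ?_
    have := congrArg det hGG
    rw [det_mul, h, zero_mul, det_neg, det_mul] at this
    exact hω.ne_zero (by simpa using this.symm)
  have hGu : IsUnit G.det := hG.det_pos.ne'.isUnit
  set K := G⁻¹ * ω
  have hGK : G * K = ω := mul_nonsing_inv_cancel_left _ _ hGu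
  clear_value K
  refine ⟨G, K, hG, (hG.isUnit.mul hG.isUnit).mul_left_cancel ?_, hGK⟩
  calc G * G * (K * K) = G * ω * K := by rw [← hGK, mul_assoc, mul_assoc, mul_assoc]
    _ = ω * (G * K) := by rw [hGω.eq, mul_assoc]
    _ = G * G * -1 := by rw [hGK, hGG, mul_neg_one, neg_neg]

theorem Matrix.det_mul_det_sub_pos {G K ω B : Matrix ι ι ℝ} {l t : ℝ} (hG : G.PosDef)
    (hK : K * K = -1) (hGK : G * K = ω) (hB : Bᵀ * ω * B = l • ω) (ht : 0 < t * l) :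
    0 < B.det * (B - t • (K * B * K)).det := by
  have hid : Bᵀ * G * (B - t • (K * B * K)) = Bᵀ * G * B + (t * l) • G := by
    have : Bᵀ * G * (K * B * K) = -(l • G) := by
      calc Bᵀ * G * (K * B * K) = Bᵀ * (G * K) * B * K := by simp only [mul_assoc]
        _ = l • (G * (K * K)) := by rw [hGK, hB, ← hGK, smul_mul_assoc, mul_assoc]
        _ = -(l • G) := by rw [hK, mul_neg_one, smul_neg]
    rw [mul_sub, mul_smul_comm, this, smul_neg, sub_neg_eq_add, smul_smul]
  have hpos : 0 < (Bᵀ * G * B + (t * l) • G).det := by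
    have hBGB : (Bᵀ * G * B).PosSemidef := by
      simpa only [conjTranspose_eq_transpose_of_trivial] using
        hG.posSemidef.conjTranspose_mul_mul_same B
    exact (PosDef.posSemidef_add hBGB (hG.smul ht)).det_pos
  rw [← hid, det_mul, det_mul, det_transpose, mul_right_comm] at hpos
  exact pos_of_mul_pos_left hpos hG.det_pos.le

theorem Matrix.det_pos_of_transpose_mul_mul_eq_smul {G K ω B : Matrix ι ι ℝ} {l : ℝ}
    (hG : G.PosDef) (hK : K * K = -1) (hGK : G * K = ω) (hB : Bᵀ * ω * B = l • ω) (hl : 0 < l) :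
    0 < B.det := by
  have h := det_mul_det_sub_pos hG hK hGK hB (t := 1) (by linarith)
  rw [one_smul] at h
  have hcomm : Commute K (B - K * B * K) := by
    have e₁ : K * (B - K * B * K) = K * B - K * K * B * K := by noncomm_ring
    have e₂ : (B - K * B * K) * K = B * K - K * B * (K * K) := by noncomm_ring
    rw [commute_iff_eq, e₁, e₂, hK]; noncomm_ring
  exact pos_of_mul_pos_left h (det_nonneg_of_commute hK hcomm)

theorem Matrix.neg_one_pow_mul_det_pos_of_transpose_mul_mul_eq_smul {n : ℕ}
    (hι : Fintype.card ι = 2 * n) {G K ω B : Matrix ι ι ℝ} {l : ℝ} (hG : G.PosDef)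
    (hK : K * K = -1) (hGK : G * K = ω) (hB : Bᵀ * ω * B = l • ω) (hl : l < 0) :
    0 < (-1) ^ n * B.det := by
  have h := det_mul_det_sub_pos hG hK hGK hB (t := -1) (by linarith)
  rw [neg_one_smul, sub_neg_eq_add] at h
  have hanti : K * (B + K * B * K) = -((B + K * B * K) * K) := by
    have e₁ : K * (B + K * B * K) = K * B + K * K * B * K := by noncomm_ring
    have e₂ : (B + K * B * K) * K = B * K + K * B * (K * K) := by noncomm_ring
    rw [e₁, e₂, hK]; noncomm_ring
  refine pos_of_mul_pos_left ?_ (neg_one_pow_mul_det_nonneg_of_anticommute hι hK hanti)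
  rwa [mul_mul_mul_comm, ← sq, ← pow_mul, pow_mul', neg_one_sq, one_pow, one_mul]

theorem det_of_lambda_symplectic {n : ℕ}
    (ω : Matrix (Fin (2 * n)) (Fin (2 * n)) ℝ) (hskew : ωᵀ = -ω)
    (hinv : IsUnit ω.det) (l : ℝ) (hl : l ≠ 0)
    (B : Matrix (Fin (2 * n)) (Fin (2 * n)) ℝ) (hB : Bᵀ * ω * B = l • ω) :
    B.det = l ^ n := by
  obtain ⟨G, K, hG, hK, hGK⟩ := exists_posDef_mul_eq_of_transpose_eq_neg hskew hinv
  have hsq : B.det ^ 2 = (l ^ n) ^ 2 := by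
    have := congrArg det hB
    rw [det_mul, det_mul, det_transpose, det_smul, Fintype.card_fin] at this
    refine mul_right_cancel₀ hinv.ne_zero ?_
    linear_combination this
  have hsign : 0 < B.det * l ^ n := by
    rcases hl.lt_or_gt with hneg | hpos
    · have hB' := neg_one_pow_mul_det_pos_of_transpose_mul_mul_eq_smul
        (Fintype.card_fin _) hG hK hGK hB hneg
      have h := mul_pos hB' (pow_pos (neg_pos.mpr hneg) n)
      rwa [neg_pow l, mul_mul_mul_comm, ← sq, ← pow_mul, pow_mul', neg_one_sq, one_pow,
        one_mul] at h
    · exact mul_pos (det_pos_of_transpose_mul_mul_eq_smul hG hK hGK hB hpos) (pow_pos hpos n)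
  refine (sq_eq_sq_iff_eq_or_eq_neg.mp hsq).resolve_right fun h => ?_
  rw [h, neg_mul] at hsign
  linarith [mul_self_nonneg (l ^ n)]
end

section
/- Sp_ω(n;ℝ) is both open and closed in Ω_n (with the subspace topology inherited from GL(2n,ℝ)); consequently Ω_n is not connected. -/
/-!
Symplectic Gram–Schmidt: for a nondegenerate alternating form `B`, pick `u, v` with `B u v = 1`;
the map fixing `u`, negating `v` and acting on the `B`-orthogonal complement of `span {u, v}` by
an anti-isometry obtained inductively satisfies `B (f x) (f y) = -B x y`. So `Bᵀ ω B = -ω` has a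
solution and both `Sp_ω` and `Sp_ω⁻¹` are nonempty. They are the fibres over the two distinct
points `ω ≠ -ω` of the continuous map `B ↦ Bᵀ ω B` on `Ω_n`, hence clopen, and `Ω_n` is not
connected.
-/

open Matrix

theorem LinearMap.SeparatingLeft.exists_apply_eq_one {K M N : Type*} [Field K] [AddCommGroup M]
    [Module K M] [AddCommGroup N] [Module K N] {B : M →ₗ[K] N →ₗ[K] K} (hB : B.SeparatingLeft)
    {u : M} (hu : u ≠ 0) : ∃ v, B u v = 1 := by
  obtain ⟨v, hv⟩ : ∃ v, B u v ≠ 0 := by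
    by_contra! h
    exact hu (hB u h)
  exact ⟨(B u v)⁻¹ • v, by rw [map_smul, smul_eq_mul, inv_mul_cancel₀ hv]⟩

open LinearMap (BilinForm)

namespace LinearMap.BilinForm

variable {K V : Type*} [Field K] [AddCommGroup V] [Module K V]

/-- For `B u v = 1` this is the `B`-orthogonal complement of `span {u, v}`. -/
def pairOrthogonal (B : BilinForm K V) (u v : V) : Submodule K V :=
  LinearMap.ker (B u) ⊓ LinearMap.ker (B v)

theorem mem_pairOrthogonal {B : BilinForm K V} {u v x : V} :
    x ∈ B.pairOrthogonal u v ↔ B u x = 0 ∧ B v x = 0 :=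
  Iff.rfl

/-- For `B u v = 1` this is the projection onto `span {u, v}` along `pairOrthogonal B u v`. -/
def pairProj (B : BilinForm K V) (u v : V) : V →ₗ[K] V :=
  (B.flip v).smulRight u - (B.flip u).smulRight v

theorem pairProj_apply (B : BilinForm K V) (u v x : V) :
    B.pairProj u v x = B x v • u - B x u • v :=
  rfl

section HyperbolicPair

variable {B : BilinForm K V} {u v : V}

theorem sub_pairProj_mem_pairOrthogonal (hB : B.IsAlt) (huv : B u v = 1) (x : V) :
    x - B.pairProj u v x ∈ B.pairOrthogonal u v := by
  have hvu : B v u = -1 := by rw [← hB.neg_eq u v, huv]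
  simp only [mem_pairOrthogonal, pairProj_apply, map_sub, map_smul, smul_eq_mul,
    hB.self_eq_zero, huv, hvu, ← hB.neg_eq u x, ← hB.neg_eq v x]
  constructor <;> ring

theorem apply_add_add_of_mem_pairOrthogonal (hB : B.IsAlt) (huv : B u v = 1) (a b a' b' : K)
    {w w' : V} (hw : w ∈ B.pairOrthogonal u v) (hw' : w' ∈ B.pairOrthogonal u v) :
    B (a • u + b • v + w) (a' • u + b' • v + w') = a * b' - a' * b + B w w' := by
  have hvu : B v u = -1 := by rw [← hB.neg_eq u v, huv]
  rw [mem_pairOrthogonal] at hw hw'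
  simp only [map_add, map_smul, LinearMap.add_apply, LinearMap.smul_apply, smul_eq_mul,
    hB.self_eq_zero, huv, hvu, hw'.1, hw'.2, ← hB.neg_eq u w, ← hB.neg_eq v w, hw.1, hw.2]
  ring

theorem add_add_sub_pairProj (x : V) :
    B x v • u + (-B x u) • v + (x - B.pairProj u v x) = x := by
  rw [pairProj_apply]
  module

theorem apply_eq_add_apply_sub_pairProj (hB : B.IsAlt) (huv : B u v = 1) (x y : V) :
    B x y =
      B x v * -B y u - B y v * -B x u + B (x - B.pairProj u v x) (y - B.pairProj u v y) := by
  conv_lhs => rw [← add_add_sub_pairProj (B := B) (u := u) (v := v) x,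
    ← add_add_sub_pairProj (B := B) (u := u) (v := v) y]
  exact apply_add_add_of_mem_pairOrthogonal hB huv _ _ _ _
    (sub_pairProj_mem_pairOrthogonal hB huv x) (sub_pairProj_mem_pairOrthogonal hB huv y)

theorem pairOrthogonal_ne_top (huv : B u v = 1) : B.pairOrthogonal u v ≠ ⊤ :=
  fun h => by simpa [mem_pairOrthogonal, huv] using Submodule.eq_top_iff'.mp h v

theorem nondegenerate_restrict_pairOrthogonal (hB : B.IsAlt) (hnd : B.Nondegenerate)
    (huv : B u v = 1) : (B.restrict (B.pairOrthogonal u v)).Nondegenerate := by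
  have hBW : (B.restrict (B.pairOrthogonal u v)).IsAlt := fun w => hB w
  refine hBW.isRefl.nondegenerate_iff_separatingLeft.mpr fun w hw => ?_
  refine Subtype.ext (hnd.1 w fun y => ?_)
  have hr := sub_pairProj_mem_pairOrthogonal hB huv y
  have h := apply_add_add_of_mem_pairOrthogonal hB huv 0 0 (B y v) (-B y u) w.2 hr
  simp only [zero_smul, zero_add, zero_mul, mul_zero, sub_zero, add_add_sub_pairProj] at h
  rw [h]
  exact hw ⟨_, hr⟩

theorem exists_comp_self_eq_neg_of_restrict_pairOrthogonal (hB : B.IsAlt) (huv : B u v = 1)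
    {f₀ : B.pairOrthogonal u v →ₗ[K] B.pairOrthogonal u v}
    (hf₀ : (B.restrict (B.pairOrthogonal u v)).comp f₀ f₀ = -B.restrict (B.pairOrthogonal u v)) :
    ∃ f : V →ₗ[K] V, B.comp f f = -B := by
  let r : V →ₗ[K] B.pairOrthogonal u v :=
    (LinearMap.id - B.pairProj u v).codRestrict _ (sub_pairProj_mem_pairOrthogonal hB huv)
  -- `u ↦ u`, `v ↦ -v`, and `f₀` on the orthogonal complement
  refine ⟨(B.flip v).smulRight u + (B.flip u).smulRight v + Submodule.subtype _ ∘ₗ f₀ ∘ₗ r, ?_⟩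
  ext x y
  have hf₀r : B (f₀ (r x)) (f₀ (r y)) = -B (r x) (r y) := LinearMap.congr_fun₂ hf₀ (r x) (r y)
  have hr (z : V) : (r z : V) = z - B.pairProj u v z := rfl
  simp only [comp_apply, LinearMap.add_apply, LinearMap.smulRight_apply, flip_apply,
    LinearMap.comp_apply, Submodule.subtype_apply, LinearMap.neg_apply]
  rw [apply_add_add_of_mem_pairOrthogonal hB huv _ _ _ _ (f₀ (r x)).2 (f₀ (r y)).2, hf₀r, hr, hr,
    apply_eq_add_apply_sub_pairProj hB huv x y]
  ring

end HyperbolicPair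

theorem IsAlt.exists_comp_self_eq_neg [FiniteDimensional K V] {B : BilinForm K V}
    (hB : B.IsAlt) (hnd : B.Nondegenerate) : ∃ f : V →ₗ[K] V, B.comp f f = -B := by
  induction hn : Module.finrank K V using Nat.strong_induction_on generalizing V with
  | _ n ih =>
  rcases subsingleton_or_nontrivial V with hV | hV
  · exact ⟨0, by ext x; simp [Subsingleton.elim x 0]⟩
  obtain ⟨u, hu⟩ := exists_ne (0 : V)
  obtain ⟨v, huv⟩ := LinearMap.SeparatingLeft.exists_apply_eq_one hnd.1 hu
  obtain ⟨f₀, hf₀⟩ := ih _ (hn ▸ Submodule.finrank_lt (pairOrthogonal_ne_top huv))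
    (B := B.restrict (B.pairOrthogonal u v)) (fun w => hB w)
    (nondegenerate_restrict_pairOrthogonal hB hnd huv) rfl
  exact exists_comp_self_eq_neg_of_restrict_pairOrthogonal hB huv hf₀

end LinearMap.BilinForm

theorem Matrix.exists_transpose_mul_mul_eq_neg {K ι : Type*} [Field K] [CharZero K] [Fintype ι]
    [DecidableEq ι] {ω : Matrix ι ι K} (hskew : ωᵀ = -ω) (hdet : ω.det ≠ 0) :
    ∃ B : Matrix ι ι K, Bᵀ * ω * B = -ω := by
  have hB : ω.toBilin'.IsAlt := LinearMap.isAlt_iff_eq_neg_flip.mpr <| by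
    ext i j
    simpa [toBilin'_single] using congr_fun₂ hskew j i
  obtain ⟨f, hf⟩ :=
    hB.exists_comp_self_eq_neg (LinearMap.BilinForm.nondegenerate_toBilin'_of_det_ne_zero' ω hdet)
  refine ⟨f.toMatrix', toBilin'.injective ?_⟩
  rw [← toBilin'_comp, toLin'_toMatrix', hf, map_neg]

theorem isClopen_preimage_singleton_of_forall_eq_or_eq {X Y : Type*} [TopologicalSpace X]
    [TopologicalSpace Y] [T1Space Y] {f : X → Y} (hf : Continuous f) {a b : Y} (hab : a ≠ b)
    (h : ∀ x, f x = a ∨ f x = b) : IsClopen (f ⁻¹' {a}) := by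
  have hcompl : f ⁻¹' {a} = (f ⁻¹' {b})ᶜ := by
    ext x
    rcases h x with hx | hx <;> simp [hx, hab, hab.symm]
  refine ⟨isClosed_singleton.preimage hf, ?_⟩
  rw [hcompl]
  exact (isClosed_singleton.preimage hf).isOpen_compl

theorem sp_omega_clopen_in_semisymplectic {n : ℕ} (hn : 0 < n)
    (ω : Matrix (Fin (2 * n)) (Fin (2 * n)) ℝ) (hskew : ωᵀ = -ω)
    (hinv : IsUnit ω.det) :
    let Ω : Set (Matrix (Fin (2 * n)) (Fin (2 * n)) ℝ) :=
      {B | Bᵀ * ω * B = ω ∨ Bᵀ * ω * B = -ω}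
    IsOpen {x : Ω | (x : Matrix (Fin (2 * n)) (Fin (2 * n)) ℝ)ᵀ * ω * x = ω} ∧
    IsClosed {x : Ω | (x : Matrix (Fin (2 * n)) (Fin (2 * n)) ℝ)ᵀ * ω * x = ω} ∧
    ¬ IsPreconnected (Set.univ : Set Ω) := by
  intro Ω
  have : Nonempty (Fin (2 * n)) := ⟨⟨0, by omega⟩⟩
  have hω : ω ≠ 0 := by
    rintro rfl
    simp at hinv
  have hne : ω ≠ -ω := fun h => hω (ext fun i j => self_eq_neg.mp (congr_fun₂ h i j))
  let q : Ω → Matrix (Fin (2 * n)) (Fin (2 * n)) ℝ := fun B => (B : Matrix _ _ ℝ)ᵀ * ω * B.1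
  have hq : Continuous q := by fun_prop
  have hsp : IsClopen (q ⁻¹' {ω}) := isClopen_preimage_singleton_of_forall_eq_or_eq hq hne (·.2)
  refine ⟨hsp.isOpen, hsp.isClosed, fun hpre => ?_⟩
  have : PreconnectedSpace Ω := preconnectedSpace_iff_univ.mpr hpre
  have hall : q ⁻¹' {ω} = Set.univ := hsp.eq_univ ⟨⟨1, Or.inl (by simp)⟩, by simp [q]⟩
  obtain ⟨B, hB⟩ := exists_transpose_mul_mul_eq_neg hskew hinv.ne_zero
  have hBω : (⟨B, Or.inr hB⟩ : Ω) ∈ q ⁻¹' {ω} := hall ▸ Set.mem_univ _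
  exact hne (hBω.symm.trans hB)
end
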